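/- Let V₀ > 0, s₁ = s₂ = s₃ = s > 0, s₄ = 0, C = (3 + 2V₀)/√(3(3 + V₀)), and λ = (1/2)√(2V₀/(2s(V₀+3))). Then V(x,t) = V₀ sech²(λ(x + x₀ - C t)) and U(x,t) = √(3/(V₀+3)) · V₀ sech²(λ(x + x₀ - C t)) solve the Boussinesq system V_t + U_x + (VU)_x + s U_xxx - s V_xxt = 0, U_t + V_x + U U_x + s V_xxx = 0. -/

import Mathlib

open Real

noncomputable def px (f : ℝ → ℝ → ℝ) : ℝ → ℝ → ℝ := fun x t => deriv (fun y => f y t) x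
noncomputable def pt (f : ℝ → ℝ → ℝ) : ℝ → ℝ → ℝ := fun x t => deriv (fun s => f x s) t
noncomputable def sech (y : ℝ) : ℝ := 1 / Real.cosh y

noncomputable def G0 (A lam : ℝ) : ℝ → ℝ := fun ξ => A * (sech (lam * ξ))^2
noncomputable def G1 (A lam : ℝ) : ℝ → ℝ := fun ξ =>
  A * (-2 * lam * Real.sinh (lam * ξ) * ((Real.cosh (lam * ξ))⁻¹)^3)
noncomputable def G2 (A lam : ℝ) : ℝ → ℝ := fun ξ =>
  A * (lam^2 * (4 * ((Real.cosh (lam * ξ))⁻¹)^2 - 6 * ((Real.cosh (lam * ξ))⁻¹)^4))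
noncomputable def G3 (A lam : ℝ) : ℝ → ℝ := fun ξ =>
  A * (lam^3 * (-8 * Real.sinh (lam * ξ) * ((Real.cosh (lam * ξ))⁻¹)^3
    + 24 * Real.sinh (lam * ξ) * ((Real.cosh (lam * ξ))⁻¹)^5))

lemma hcosh_ne (y : ℝ) : Real.cosh y ≠ 0 := (Real.cosh_pos y).ne'

lemma haff (lam : ℝ) (ξ : ℝ) : HasDerivAt (fun ξ : ℝ => lam * ξ) lam ξ := by
  simpa using (hasDerivAt_id ξ).const_mul lam

lemma hG0' (A lam : ℝ) (ξ : ℝ) : HasDerivAt (G0 A lam) (G1 A lam ξ) ξ := by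
  have h1 : HasDerivAt (fun ξ : ℝ => Real.cosh (lam * ξ))
      (Real.sinh (lam * ξ) * lam) ξ := (haff lam ξ).cosh
  have h2 := ((h1.inv (hcosh_ne _)).pow 2).const_mul A
  have heq : G0 A lam = fun ξ => A * ((Real.cosh (lam * ξ))⁻¹)^2 := by
    funext ξ; simp only [G0, sech, one_div]
  rw [heq]
  refine h2.congr_deriv (Eq.symm ?_)
  have hc := hcosh_ne (lam * ξ)
  simp only [G1, Pi.inv_apply, Pi.pow_apply, Nat.reduceSub, pow_one, Nat.cast_ofNat]
  field_simp

lemma hG1' (A lam : ℝ) (ξ : ℝ) : HasDerivAt (G1 A lam) (G2 A lam ξ) ξ := by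
  have h1 : HasDerivAt (fun ξ : ℝ => Real.cosh (lam * ξ))
      (Real.sinh (lam * ξ) * lam) ξ := (haff lam ξ).cosh
  have hS : HasDerivAt (fun ξ : ℝ => Real.sinh (lam * ξ))
      (Real.cosh (lam * ξ) * lam) ξ := (haff lam ξ).sinh
  have h2 := (hS.mul ((h1.inv (hcosh_ne _)).pow 3)).const_mul (A * (-2 * lam))
  have heq : G1 A lam = fun ξ =>
      A * (-2 * lam) * (Real.sinh (lam * ξ) * ((Real.cosh (lam * ξ))⁻¹)^3) := by
    funext ξ; simp only [G1]; ring
  rw [heq]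
  refine h2.congr_deriv (Eq.symm ?_)
  have hc := hcosh_ne (lam * ξ)
  have hpy := Real.cosh_sq (lam * ξ)
  simp only [G2, Pi.inv_apply, Pi.pow_apply, Nat.reduceSub, pow_one, Nat.cast_ofNat]
  field_simp
  linear_combination (6 * A * lam^2) * hpy

lemma hG2' (A lam : ℝ) (ξ : ℝ) : HasDerivAt (G2 A lam) (G3 A lam ξ) ξ := by
  have h1 : HasDerivAt (fun ξ : ℝ => Real.cosh (lam * ξ))
      (Real.sinh (lam * ξ) * lam) ξ := (haff lam ξ).cosh
  have hinv := h1.inv (hcosh_ne _)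
  have h2 := (((hinv.pow 2).const_mul 4).sub ((hinv.pow 4).const_mul 6)).const_mul (A * lam^2)
  have heq : G2 A lam = fun ξ =>
      A * lam^2 * (4 * ((Real.cosh (lam * ξ))⁻¹)^2 - 6 * ((Real.cosh (lam * ξ))⁻¹)^4) := by
    funext ξ; simp only [G2]; ring
  rw [heq]
  refine h2.congr_deriv (Eq.symm ?_)
  have hc := hcosh_ne (lam * ξ)
  simp only [G3, Pi.inv_apply, Pi.pow_apply, Nat.reduceSub, pow_one, Nat.cast_ofNat]
  field_simp
  ring

lemma px_eq (x₀ C : ℝ) (f f' : ℝ → ℝ) (hf : ∀ ξ, HasDerivAt f (f' ξ) ξ)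
    (g : ℝ → ℝ → ℝ) (hg : g = fun x t => f (x + x₀ - C * t)) :
    px g = fun x t => f' (x + x₀ - C * t) := by
  funext x t
  have h : HasDerivAt (fun y : ℝ => y + x₀ - C * t) 1 x :=
    ((hasDerivAt_id x).add_const x₀).sub_const (C * t)
  have h2 : HasDerivAt (fun y => f (y + x₀ - C * t)) (f' (x + x₀ - C * t) * 1) x :=
    (hf (x + x₀ - C * t)).comp x h
  have : px g x t = deriv (fun y => f (y + x₀ - C * t)) x := by rw [hg]; rfl
  rw [this, h2.deriv, mul_one]

lemma pt_eq (x₀ C : ℝ) (f f' : ℝ → ℝ) (hf : ∀ ξ, HasDerivAt f (f' ξ) ξ)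
    (g : ℝ → ℝ → ℝ) (hg : g = fun x t => f (x + x₀ - C * t)) :
    pt g = fun x t => -C * f' (x + x₀ - C * t) := by
  funext x t
  have h : HasDerivAt (fun τ : ℝ => x + x₀ - C * τ) (-C) t := by
    simpa using ((hasDerivAt_id t).const_mul C).const_sub (x + x₀)
  have h2 : HasDerivAt (fun τ => f (x + x₀ - C * τ)) (f' (x + x₀ - C * t) * -C) t :=
    (hf (x + x₀ - C * t)).comp t h
  have : pt g x t = deriv (fun τ => f (x + x₀ - C * τ)) t := by rw [hg]; rfl
  rw [this, h2.deriv]; ring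

/-- Solitary wave solution of the Boussinesq system in the case s₁ = s₂ = s₃ = s > 0,
s₄ = 0, with speed C = (3 + 2V₀)/√(3(3 + V₀)) and width λ = (1/2)√(2V₀/(2s(V₀+3))). -/
theorem boussinesq_solitary_wave (V₀ s : ℝ) (hV₀ : 0 < V₀) (hs : 0 < s)
    (x₀ C lam : ℝ)
    (hC : C = (3 + 2 * V₀) / Real.sqrt (3 * (3 + V₀)))
    (hlam : lam = (1/2) * Real.sqrt (2 * V₀ / (2 * s * (V₀ + 3))))
    (V U : ℝ → ℝ → ℝ)
    (hV : V = fun x t => V₀ * (sech (lam * (x + x₀ - C * t)))^2)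
    (hU : U = fun x t =>
      Real.sqrt (3 / (V₀ + 3)) * V₀ * (sech (lam * (x + x₀ - C * t)))^2) :
    ∀ x t : ℝ,
      pt V x t + px U x t + px (fun x t => V x t * U x t) x t
        + s * px (px (px U)) x t - s * pt (px (px V)) x t = 0 ∧
      pt U x t + px V x t + U x t * px U x t + s * px (px (px V)) x t = 0 := by
  set a : ℝ := Real.sqrt (3 / (V₀ + 3)) with ha_def
  have hV3 : (0:ℝ) < V₀ + 3 := by linarith
  have hV3' : V₀ + 3 ≠ 0 := hV3.ne'
  -- key algebraic relations
  have ha2 : a^2 * (V₀ + 3) = 3 := by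
    rw [ha_def, Real.sq_sqrt (by positivity : (3:ℝ)/(V₀+3) ≥ 0)]
    field_simp
  have hmu : 4 * s * lam^2 * (V₀ + 3) = V₀ := by
    have h1 : lam^2 = (1/4) * (2 * V₀ / (2 * s * (V₀ + 3))) := by
      rw [hlam, mul_pow, Real.sq_sqrt (by positivity : (0:ℝ) ≤ 2 * V₀ / (2 * s * (V₀ + 3)))]
      norm_num
    rw [h1]
    field_simp
  have hR : Real.sqrt (3 * (3 + V₀)) ≠ 0 := by positivity
  have haR : a * Real.sqrt (3 * (3 + V₀)) = 3 := by
    rw [ha_def, ← Real.sqrt_mul (by positivity : (0:ℝ) ≤ 3 / (V₀ + 3))]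
    have : 3 / (V₀ + 3) * (3 * (3 + V₀)) = 9 := by field_simp; ring
    rw [this]
    rw [show (9:ℝ) = 3^2 by norm_num, Real.sqrt_sq (by norm_num)]
  have hmul : Real.sqrt 3 * Real.sqrt (3 + V₀) = Real.sqrt (3 * (3 + V₀)) :=
    (Real.sqrt_mul (by norm_num) _).symm
  have hac : 3 * C = a * (2 * V₀ + 3) := by
    rw [hC]
    field_simp
    linear_combination (-(2 * V₀ + 3)) * haR
  -- derivative identities
  have haC : a * C * (V₀ + 3) = 2 * V₀ + 3 := by
    linear_combination ((2 * V₀ + 3) / 3) * ha2 + (a * (V₀ + 3) / 3) * hac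
  have hUeq : U = fun x t => G0 (a * V₀) lam (x + x₀ - C * t) := by
    rw [hU]; rfl
  have hVeq : V = fun x t => G0 V₀ lam (x + x₀ - C * t) := by
    rw [hV]; rfl
  have hptV : pt V = fun x t => -C * G1 V₀ lam (x + x₀ - C * t) :=
    pt_eq x₀ C _ _ (hG0' V₀ lam) V hVeq
  have hpxV : px V = fun x t => G1 V₀ lam (x + x₀ - C * t) :=
    px_eq x₀ C _ _ (hG0' V₀ lam) V hVeq
  have hpxpxV : px (px V) = fun x t => G2 V₀ lam (x + x₀ - C * t) :=
    px_eq x₀ C _ _ (hG1' V₀ lam) _ hpxV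
  have hptpxpxV : pt (px (px V)) = fun x t => -C * G3 V₀ lam (x + x₀ - C * t) :=
    pt_eq x₀ C _ _ (hG2' V₀ lam) _ hpxpxV
  have hpxpxpxV : px (px (px V)) = fun x t => G3 V₀ lam (x + x₀ - C * t) :=
    px_eq x₀ C _ _ (hG2' V₀ lam) _ hpxpxV
  have hptU : pt U = fun x t => -C * G1 (a * V₀) lam (x + x₀ - C * t) :=
    pt_eq x₀ C _ _ (hG0' (a * V₀) lam) U hUeq
  have hpxU : px U = fun x t => G1 (a * V₀) lam (x + x₀ - C * t) :=
    px_eq x₀ C _ _ (hG0' (a * V₀) lam) U hUeq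
  have hpxpxU : px (px U) = fun x t => G2 (a * V₀) lam (x + x₀ - C * t) :=
    px_eq x₀ C _ _ (hG1' (a * V₀) lam) _ hpxU
  have hpxpxpxU : px (px (px U)) = fun x t => G3 (a * V₀) lam (x + x₀ - C * t) :=
    px_eq x₀ C _ _ (hG2' (a * V₀) lam) _ hpxpxU
  have hVUeq : (fun x t => V x t * U x t)
      = fun x t => (fun ξ => G0 V₀ lam ξ * G0 (a * V₀) lam ξ) (x + x₀ - C * t) := by
    rw [hV, hU]; rfl
  have hpxVU : px (fun x t => V x t * U x t) = fun x t =>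
      (G1 V₀ lam (x + x₀ - C * t) * G0 (a * V₀) lam (x + x₀ - C * t)
        + G0 V₀ lam (x + x₀ - C * t) * G1 (a * V₀) lam (x + x₀ - C * t)) :=
    px_eq x₀ C _ _ (fun ξ => (hG0' V₀ lam ξ).mul (hG0' (a * V₀) lam ξ)) _ hVUeq
  intro x t
  set ξ := x + x₀ - C * t with hξ
  set S := Real.sinh (lam * ξ) with hS
  set ci := (Real.cosh (lam * ξ))⁻¹ with hci
  constructor
  · rw [hptV, hpxVU, hpxpxpxU, hptpxpxV, hpxU]
    simp only [G0, G1, G2, G3, sech, one_div, ← hξ, ← hS, ← hci]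
    linear_combination ((-4*a*lam*V₀/3)*S*ci^3 + 4*a*lam*V₀*S*ci^5) * hmu
      + ((-2*lam*V₀*(4*s*lam^2-1)/3)*S*ci^3 + 8*s*lam^3*V₀*S*ci^5) * hac
  · rw [hptU, hpxpxpxV, hpxV, hpxU, hU]
    simp only [G0, G1, G2, G3, sech, one_div, ← hξ, ← hS, ← hci]
    apply mul_left_cancel₀ hV3'
    linear_combination (2*lam*V₀*S*ci^3) * haC
      + (-2*lam*V₀*S*ci^3 + 6*lam*V₀*S*ci^5) * hmu
      + (-2*lam*V₀^2*S*ci^5) * ha2
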